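/- Let (g, Ric, R) be as in a 4-dimensional Lorentzian vector space, with Ric = c·A⊗A + d·g where A is a unit timelike covector (g(A♯,A♯) = -1), c = κ²(p+ρ)/F_R and d = (2κ²p + F)/(2F_R) with F_R ≠ 0. If additionally Ric(A♯,·) = (R/4)·A and trace_g(Ric) = R, then p = -(2F - R·F_R)/(4κ²) and ρ = (2F - R·F_R)/(4κ²); in particular p + ρ = 0. -/

import Mathlib

/-!
Contracting `Ric = c A⊗A + d g` with `A♯` gives `(d - c) A`, since `g(A♯, A♯) = -1`, and taking its
trace gives `4d - c`. Thus the eigenvalue condition reads `d - c = R/4` and the trace condition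
`4d - c = R`, which force `c = 0` and `d = R/4`; these two equations are then solved for `p` and `ρ`.
-/

open Matrix

variable {ι K : Type*}

def perfectFluidTensor [CommRing K] (g : Matrix ι ι K) (A : ι → K) (c d : K) : Matrix ι ι K :=
  c • vecMulVec A A + d • g

theorem perfectFluidTensor_transpose [CommRing K] {g : Matrix ι ι K} (hg : gᵀ = g) (A : ι → K)
    (c d : K) : (perfectFluidTensor g A c d)ᵀ = perfectFluidTensor g A c d := by
  simp [perfectFluidTensor, transpose_add, transpose_smul, transpose_vecMulVec, hg]

variable [Fintype ι] [DecidableEq ι]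

theorem vecMul_perfectFluidTensor [CommRing K] {g ginv : Matrix ι ι K} (hg : gᵀ = g)
    (hginv : ginv * g = 1) (A : ι → K) (c d : K) :
    (ginv *ᵥ A) ᵥ* perfectFluidTensor g A c d = (c * (A ⬝ᵥ ginv *ᵥ A) + d) • A := by
  have hginvT : ginvᵀ * g = 1 := by
    simpa [hg] using congrArg transpose (mul_eq_one_comm.mp hginv)
  rw [perfectFluidTensor, vecMul_add, vecMul_smul, vecMul_smul, vecMul_vecMulVec, vecMul_mulVec,
    hginvT, vecMul_one, dotProduct_comm, smul_smul, add_smul]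

theorem trace_mul_perfectFluidTensor [CommRing K] {g ginv : Matrix ι ι K} (hginv : ginv * g = 1)
    (A : ι → K) (c d : K) :
    trace (ginv * perfectFluidTensor g A c d) = c * (A ⬝ᵥ ginv *ᵥ A) + d * Fintype.card ι := by
  rw [perfectFluidTensor, mul_add, Matrix.mul_smul, Matrix.mul_smul, hginv, mul_vecMulVec,
    trace_add, trace_smul, trace_smul, trace_vecMulVec, trace_one, dotProduct_comm, smul_eq_mul,
    smul_eq_mul]

theorem perfectFluidTensor_coeffs_of_eigen_of_trace [Field K] [CharZero K]
    {g ginv : Matrix ι ι K} {A : ι → K} {c d R : K} (hι : Fintype.card ι ≠ 1) (hg : gᵀ = g)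
    (hginv : ginv * g = 1) (hA : A ⬝ᵥ ginv *ᵥ A = -1)
    (heigen : (ginv *ᵥ A) ᵥ* perfectFluidTensor g A c d = (R / Fintype.card ι) • A)
    (htrace : trace (ginv * perfectFluidTensor g A c d) = R) :
    c = 0 ∧ d = R / Fintype.card ι := by
  have hA0 : A ≠ 0 := by
    rintro rfl
    simp at hA
  have hn : (Fintype.card ι : K) ≠ 0 := by
    obtain ⟨i, -⟩ := Function.ne_iff.mp hA0
    have : Nonempty ι := ⟨i⟩
    exact Nat.cast_ne_zero.mpr Fintype.card_ne_zero
  have hn1 : (Fintype.card ι : K) - 1 ≠ 0 := sub_ne_zero.mpr (mod_cast hι)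
  have hdc : -c + d = R / Fintype.card ι := smul_left_injective K hA0 <| by
    simpa [vecMul_perfectFluidTensor hg hginv, hA] using heigen
  rw [trace_mul_perfectFluidTensor hginv, hA] at htrace
  have hc : c = 0 := by
    refine (mul_eq_zero.mp ?_).resolve_left hn1
    field_simp at hdc
    linear_combination htrace - hdc
  exact ⟨hc, by linear_combination hdc + hc⟩

theorem fR_perfectFluid_eos_of_coeffs {R p ρ κ F FR : ℝ} (hκ : κ ≠ 0) (hFR : FR ≠ 0)
    (hc : κ^2 * (p + ρ) / FR = 0) (hd : (2 * κ^2 * p + F) / (2 * FR) = R / 4) :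
    p = -(2 * F - R * FR) / (4 * κ^2) ∧ ρ = (2 * F - R * FR) / (4 * κ^2) ∧ p + ρ = 0 := by
  have hpρ : p + ρ = 0 := by simpa [hκ, hFR] using hc
  have hp : p = -(2 * F - R * FR) / (4 * κ^2) := by
    field_simp at hd ⊢
    linarith
  exact ⟨hp, by linear_combination hpρ - hp, hpρ⟩

/-- Perfect-fluid generalized Ricci recurrent solution of F(R)-gravity with
constant scalar curvature: if `Ric = c·A⊗A + d·g` with `A` unit timelike,
`c = κ²(p+ρ)/F_R`, `d = (2κ²p+F)/(2F_R)`, `Ric(A♯,·) = (R/4)A` and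
`trace_g Ric = R`, then `p = -(2F - R·F_R)/(4κ²)`, `ρ = (2F - R·F_R)/(4κ²)`
and `p + ρ = 0`. -/
theorem GR4_FR_perfect_fluid_eos
    (g ginv Ric : Fin 4 → Fin 4 → ℝ) (A : Fin 4 → ℝ)
    (R p ρ κ F FR c d : ℝ)
    (hκ : κ ≠ 0) (hFR : FR ≠ 0)
    (hgsymm : ∀ i j, g i j = g j i)
    (hinv : ∀ i j, (∑ k, ginv i k * g k j) = if i = j then (1:ℝ) else 0)
    (hunit : (∑ j, ∑ k, ginv j k * A j * A k) = -1)
    (hc : c = κ^2 * (p + ρ) / FR)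
    (hd : d = (2 * κ^2 * p + F) / (2 * FR))
    (hRic : ∀ i j, Ric i j = c * A i * A j + d * g i j)
    (heigen : ∀ i, (∑ j, (∑ k, ginv j k * A k) * Ric j i) = (R/4) * A i)
    (htrace : (∑ j, ∑ k, ginv j k * Ric j k) = R) :
    p = -(2 * F - R * FR) / (4 * κ^2) ∧
    ρ = (2 * F - R * FR) / (4 * κ^2) ∧
    p + ρ = 0 := by
  have hg : (of g)ᵀ = of g := Matrix.ext fun i j => hgsymm j i
  have hginv : of ginv * of g = 1 := Matrix.ext fun i j => by
    simpa [mul_apply, one_apply] using hinv i j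
  have hRic' : of Ric = perfectFluidTensor (of g) A c d := Matrix.ext fun i j => by
    simp [perfectFluidTensor, hRic, vecMulVec_apply, mul_assoc]
  have hunit' : A ⬝ᵥ of ginv *ᵥ A = -1 := by
    rw [← hunit]
    simp only [dotProduct, mulVec, of_apply, Finset.mul_sum]
    exact Finset.sum_congr rfl fun j _ => Finset.sum_congr rfl fun k _ => by ring
  have heigen' : (of ginv *ᵥ A) ᵥ* perfectFluidTensor (of g) A c d = (R / 4) • A := by
    ext i
    simpa [← hRic', vecMul, dotProduct, mulVec] using heigen i
  have htrace' : trace (of ginv * perfectFluidTensor (of g) A c d) = R := by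
    rw [← perfectFluidTensor_transpose hg, ← hRic']
    simpa [trace, mul_apply] using htrace
  obtain ⟨hc0, hd0⟩ := perfectFluidTensor_coeffs_of_eigen_of_trace (by simp) hg hginv hunit'
    (by simpa using heigen') htrace'
  simp only [Fintype.card_fin, Nat.cast_ofNat] at hd0
  exact fR_perfectFluid_eos_of_coeffs hκ hFR (hc ▸ hc0) (hd ▸ hd0)
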